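/- Let F₂ be the free group on two generators with word metric d. Fix x₀ ∈ F₂ and k ∈ ℕ, and let x, x' ∈ F₂ with d(x₀,x) > k and d(x₀,x') > k. Then the following are equivalent: (1) d(x,z) = d(x',z) for every z ∈ F₂ with d(x₀,z) ≤ k; (2) there exist y ∈ F₂ with d(x₀,y) = k and r ≥ 1 such that both x and x' belong to the flower Fl_{x₀}(y,r). Consequently, the equivalence classes of the relation (1) on the complement of the closed ball B(x₀,k) are exactly the nonempty flowers Fl_{x₀}(y,r) with d(x₀,y) = k and r ≥ 1. -/

import Mathlib

/-- The left-invariant word metric on the free group on two generators. -/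
def wordDist (g h : FreeGroup (Fin 2)) : ℕ := FreeGroup.norm (g⁻¹ * h)

/-- The flower `Fl_x(y,r)`: the set of points at distance `r` from `y` whose geodesic to `x`
passes through `y`. -/
def flower (x y : FreeGroup (Fin 2)) (r : ℕ) : Set (FreeGroup (Fin 2)) :=
  {v | wordDist v y = r ∧ wordDist v x = r + wordDist y x}

/-!
The Cayley graph of a free group is a tree. If the reduced words of `g` and `h` are `C ++ U`
and `C ++ V` with `C` their longest common prefix, the reduced word of `g⁻¹ * h` is
`U⁻¹ ++ V`. Consequently a point `v` outside the ball `B(x₀, k)` leaves it through a unique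
point `y` (the length-`k` prefix of the reduced word of `x₀⁻¹ * v`, translated back), and every
`z` in the ball satisfies `d(z, v) = d(z, y) + d(y, v)`. So the distances from `v` to the ball
only depend on `y` and `r = d(y, v)`, i.e. on the flower of `v`; conversely, testing the
equidistance at `z = x₀` and `z = y` already puts `x'` into the flower of `x`.
-/

namespace FreeGroup

variable {α : Type*} [DecidableEq α]

theorem IsReduced.invRev {L : List (α × Bool)} (h : IsReduced L) : IsReduced (invRev L) := by
  rw [isReduced_iff_reduce_eq, reduce_invRev, h.reduce_eq]

theorem exists_reduce_invRev_append_eq :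
    ∀ {L₁ L₂ : List (α × Bool)}, IsReduced L₁ → IsReduced L₂ →
      ∃ C U V, L₁ = C ++ U ∧ L₂ = C ++ V ∧ reduce (invRev L₁ ++ L₂) = invRev U ++ V
  | [], L₂, _, h₂ => ⟨[], [], L₂, rfl, rfl, by simpa using h₂.reduce_eq⟩
  | a :: L₁, [], h₁, _ => ⟨[], a :: L₁, [], rfl, rfl, by simpa using h₁.invRev.reduce_eq⟩
  | a :: L₁, b :: L₂, h₁, h₂ => by
    by_cases hab : a = b
    · subst hab
      obtain ⟨C, U, V, rfl, rfl, hred⟩ := exists_reduce_invRev_append_eq h₁.tail h₂.tail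
      refine ⟨a :: C, U, V, rfl, rfl, hred ▸ reduce.Step.eq ?_⟩
      simpa [invRev_cons, invRev] using
        Red.Step.not_rev (L₁ := invRev (C ++ U)) (L₂ := C ++ V) (x := a.1) (b := a.2)
    · refine ⟨[], a :: L₁, b :: L₂, rfl, rfl, IsReduced.reduce_eq ?_⟩
      rw [invRev_cons]
      refine (invRev_cons ▸ h₁.invRev).append_overlap ?_ (by simp [invRev])
      obtain ⟨a₁, a₂⟩ := a
      obtain ⟨b₁, b₂⟩ := b
      simp only [invRev, List.reverse_singleton, List.map_singleton, List.singleton_append,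
        isReduced_cons_cons, h₂, and_true]
      rintro rfl
      cases a₂ <;> cases b₂ <;> simp_all

theorem exists_toWord_inv_mul (g h : FreeGroup α) :
    ∃ C U V, g.toWord = C ++ U ∧ h.toWord = C ++ V ∧ (g⁻¹ * h).toWord = invRev U ++ V := by
  rw [toWord_mul, toWord_inv]
  exact exists_reduce_invRev_append_eq isReduced_toWord isReduced_toWord

theorem inv_mul_eq_mk_of_toWord_eq_append {g h : FreeGroup α} {S : List (α × Bool)}
    (hS : h.toWord = g.toWord ++ S) : g⁻¹ * h = mk S := by
  rw [inv_mul_eq_iff_eq_mul, ← mk_toWord (x := h), hS, ← mul_mk, mk_toWord]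

theorem norm_inv_mul_of_toWord_eq_append {g h : FreeGroup α} {S : List (α × Bool)}
    (hS : h.toWord = g.toWord ++ S) : norm (g⁻¹ * h) = S.length := by
  rw [inv_mul_eq_mk_of_toWord_eq_append hS, norm, toWord_mk,
    ((isReduced_toWord (x := h)).infix ⟨g.toWord, [], by simp [hS]⟩).reduce_eq]

theorem toWord_prefix_of_norm_add_norm_inv_mul {g h : FreeGroup α}
    (hgh : norm g + norm (g⁻¹ * h) = norm h) : g.toWord <+: h.toWord := by
  obtain ⟨C, U, V, hg, hh, hgh'⟩ := exists_toWord_inv_mul g h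
  have hU : U.length = 0 := by
    simp only [norm, hg, hh, hgh', List.length_append, invRev_length] at hgh
    omega
  rw [hg, List.length_eq_zero_iff.mp hU, List.append_nil]
  exact ⟨V, hh.symm⟩

theorem eq_of_norm_add_norm_inv_mul_eq {g g' h : FreeGroup α}
    (hg : norm g + norm (g⁻¹ * h) = norm h) (hg' : norm g' + norm (g'⁻¹ * h) = norm h)
    (hn : norm g = norm g') : g = g' := by
  apply toWord_injective
  rw [List.prefix_iff_eq_take.mp (toWord_prefix_of_norm_add_norm_inv_mul hg),
    List.prefix_iff_eq_take.mp (toWord_prefix_of_norm_add_norm_inv_mul hg')]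
  exact congrArg (h.toWord.take ·) hn

theorem exists_norm_eq_and_norm_inv_mul_eq {h : FreeGroup α} {k : ℕ} (hk : k ≤ norm h) :
    ∃ g, norm g = k ∧ norm (g⁻¹ * h) = norm h - k := by
  have hg : (mk (h.toWord.take k)).toWord = h.toWord.take k := by
    rw [toWord_mk, (isReduced_toWord.infix (List.take_prefix _ _).isInfix).reduce_eq]
  refine ⟨mk (h.toWord.take k), by simpa [norm, hg] using hk, ?_⟩
  rw [norm_inv_mul_of_toWord_eq_append (by rw [hg, List.take_append_drop]), List.length_drop,
    norm]

theorem norm_inv_mul_eq_add_of_norm_add_norm_inv_mul {g h w : FreeGroup α}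
    (hgh : norm g + norm (g⁻¹ * h) = norm h) (hw : norm w ≤ norm g) :
    norm (w⁻¹ * h) = norm (w⁻¹ * g) + norm (g⁻¹ * h) := by
  obtain ⟨S, hS⟩ := toWord_prefix_of_norm_add_norm_inv_mul hgh
  obtain ⟨C, U, V, hwC, hgC, hwg⟩ := exists_toWord_inv_mul w g
  rw [norm_inv_mul_of_toWord_eq_append hS.symm]
  by_cases hV : V = []
  · have hU : U = [] := by
      simp only [norm, hwC, hgC, hV, List.length_append, List.length_nil] at hw
      exact List.length_eq_zero_iff.mp (by omega)
    obtain rfl : w = g := toWord_injective (by rw [hwC, hgC, hU, hV])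
    simp [norm_inv_mul_of_toWord_eq_append hS.symm]
  · have hred : IsReduced (invRev U ++ V ++ S) :=
      (hwg ▸ isReduced_toWord).append_overlap
        ((isReduced_toWord (x := h)).infix ⟨C, [], by simp [← hS, hgC]⟩) hV
    have hwh : w⁻¹ * h = mk (invRev U ++ V ++ S) := by
      rw [← mul_mk, ← hwg, mk_toWord, ← inv_mul_eq_mk_of_toWord_eq_append hS.symm,
        mul_assoc, mul_inv_cancel_left]
    rw [hwh, norm, toWord_mk, hred.reduce_eq, norm, hwg]
    simp [add_assoc]

end FreeGroup

open FreeGroup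

theorem wordDist_comm (g h : FreeGroup (Fin 2)) : wordDist g h = wordDist h g := by
  rw [wordDist, wordDist, ← norm_inv_eq, mul_inv_rev, inv_inv]

theorem wordDist_self (g : FreeGroup (Fin 2)) : wordDist g g = 0 := by
  simp [wordDist]

theorem wordDist_eq_add_of_wordDist_add_eq {x y v z : FreeGroup (Fin 2)}
    (hy : wordDist x y + wordDist y v = wordDist x v) (hz : wordDist x z ≤ wordDist x y) :
    wordDist z v = wordDist z y + wordDist y v := by
  have hy' : norm (x⁻¹ * y) + norm ((x⁻¹ * y)⁻¹ * (x⁻¹ * v)) = norm (x⁻¹ * v) := by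
    simpa [wordDist, mul_assoc] using hy
  simpa [wordDist, mul_assoc] using norm_inv_mul_eq_add_of_norm_add_norm_inv_mul hy' hz

theorem wordDist_add_wordDist_of_mem_flower {x₀ y v : FreeGroup (Fin 2)} {r : ℕ}
    (hv : v ∈ flower x₀ y r) : wordDist x₀ y + wordDist y v = wordDist x₀ v := by
  rw [wordDist_comm x₀ v, hv.2, wordDist_comm y v, hv.1, wordDist_comm y x₀, add_comm]

theorem wordDist_eq_add_of_mem_flower {x₀ y v z : FreeGroup (Fin 2)} {r : ℕ}
    (hv : v ∈ flower x₀ y r) (hz : wordDist x₀ z ≤ wordDist x₀ y) :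
    wordDist v z = wordDist y z + r := by
  rw [wordDist_comm v z, wordDist_comm y z, ← hv.1, wordDist_comm v y]
  exact wordDist_eq_add_of_wordDist_add_eq (wordDist_add_wordDist_of_mem_flower hv) hz

theorem wordDist_lt_of_mem_flower {x₀ y v : FreeGroup (Fin 2)} {r : ℕ} (hr : 0 < r)
    (hv : v ∈ flower x₀ y r) : wordDist x₀ y < wordDist x₀ v := by
  rw [wordDist_comm x₀ v, hv.2, wordDist_comm]
  omega

theorem eq_and_eq_of_mem_flower {x₀ y y' v : FreeGroup (Fin 2)} {r r' : ℕ}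
    (hv : v ∈ flower x₀ y r) (hv' : v ∈ flower x₀ y' r') (hyy' : wordDist x₀ y = wordDist x₀ y') :
    y = y' ∧ r = r' := by
  have hgeod {y : FreeGroup (Fin 2)} {r : ℕ} (hv : v ∈ flower x₀ y r) :
      norm (x₀⁻¹ * y) + norm ((x₀⁻¹ * y)⁻¹ * (x₀⁻¹ * v)) = norm (x₀⁻¹ * v) := by
    simpa [wordDist, mul_assoc] using wordDist_add_wordDist_of_mem_flower hv
  refine ⟨mul_left_cancel (eq_of_norm_add_norm_inv_mul_eq (hgeod hv) (hgeod hv') hyy'), ?_⟩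
  have hrr' := hv.2.symm.trans hv'.2
  rw [wordDist_comm y, wordDist_comm y', hyy'] at hrr'
  exact Nat.add_right_cancel hrr'

theorem exists_mem_flower {x₀ x : FreeGroup (Fin 2)} {k : ℕ} (hk : k ≤ wordDist x₀ x) :
    ∃ y, wordDist x₀ y = k ∧ x ∈ flower x₀ y (wordDist x₀ x - k) := by
  obtain ⟨g, hg, hgx⟩ := exists_norm_eq_and_norm_inv_mul_eq hk
  have hy : wordDist x₀ (x₀ * g) = k := by simpa [wordDist] using hg
  refine ⟨x₀ * g, hy, ?_, ?_⟩
  · rw [wordDist_comm]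
    simpa [wordDist, mul_assoc] using hgx
  · rw [wordDist_comm x, wordDist_comm _ x₀, hy]
    omega

theorem equidistant_on_ball_iff_exists_flower {x₀ x x' : FreeGroup (Fin 2)} {k : ℕ}
    (hx : k < wordDist x₀ x) :
    (∀ z, wordDist x₀ z ≤ k → wordDist x z = wordDist x' z) ↔
      ∃ y r, wordDist x₀ y = k ∧ 1 ≤ r ∧ x ∈ flower x₀ y r ∧ x' ∈ flower x₀ y r := by
  constructor
  · intro heq
    obtain ⟨y, hy, hxy, hxx₀⟩ := exists_mem_flower hx.le
    refine ⟨y, _, hy, by omega, ⟨hxy, hxx₀⟩, ?_, ?_⟩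
    · rw [← heq y hy.le, hxy]
    · rw [← heq x₀ (by simp [wordDist_self]), hxx₀]
  · rintro ⟨y, r, rfl, -, hxy, hx'y⟩ z hz
    rw [wordDist_eq_add_of_mem_flower hxy hz, wordDist_eq_add_of_mem_flower hx'y hz]

theorem setOf_equidistant_on_ball_eq_flower {x₀ x y : FreeGroup (Fin 2)} {k r : ℕ}
    (hy : wordDist x₀ y = k) (hr : 1 ≤ r) (hx : x ∈ flower x₀ y r) :
    {x' | k < wordDist x₀ x' ∧ ∀ z, wordDist x₀ z ≤ k → wordDist x z = wordDist x' z} =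
      flower x₀ y r := by
  subst hy
  ext x'
  constructor
  · rintro ⟨-, heq⟩
    obtain ⟨y₁, r₁, hy₁, -, hxy₁, hx'y₁⟩ :=
      (equidistant_on_ball_iff_exists_flower (wordDist_lt_of_mem_flower hr hx)).mp heq
    obtain ⟨rfl, rfl⟩ := eq_and_eq_of_mem_flower hxy₁ hx hy₁
    exact hx'y₁
  · intro hx'
    exact ⟨wordDist_lt_of_mem_flower hr hx',
      (equidistant_on_ball_iff_exists_flower (wordDist_lt_of_mem_flower hr hx)).mpr
        ⟨y, r, rfl, hr, hx, hx'⟩⟩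

/-- **Flowers are the equivalence classes of the "equidistant from the ball" relation.**
For `x, x'` outside the closed ball `B(x₀,k)`, being equidistant from every point of the
ball is equivalent to lying in a common flower `Fl_{x₀}(y,r)` with `d(x₀,y) = k` and
`r ≥ 1`; consequently the equivalence classes of this relation on the complement of the
ball are exactly the nonempty such flowers. -/
theorem flower_equivalence_classes (x₀ : FreeGroup (Fin 2)) (k : ℕ) :
    (∀ x x' : FreeGroup (Fin 2), k < wordDist x₀ x → k < wordDist x₀ x' →
      ((∀ z : FreeGroup (Fin 2), wordDist x₀ z ≤ k → wordDist x z = wordDist x' z) ↔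
        (∃ (y : FreeGroup (Fin 2)) (r : ℕ), wordDist x₀ y = k ∧ 1 ≤ r ∧
          x ∈ flower x₀ y r ∧ x' ∈ flower x₀ y r))) ∧
    {Z : Set (FreeGroup (Fin 2)) | ∃ x : FreeGroup (Fin 2), k < wordDist x₀ x ∧
        Z = {x' | k < wordDist x₀ x' ∧
          ∀ z : FreeGroup (Fin 2), wordDist x₀ z ≤ k → wordDist x z = wordDist x' z}} =
      {Z : Set (FreeGroup (Fin 2)) | Z.Nonempty ∧ ∃ (y : FreeGroup (Fin 2)) (r : ℕ),
        wordDist x₀ y = k ∧ 1 ≤ r ∧ Z = flower x₀ y r} := by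
  refine ⟨fun x x' hx _ => equidistant_on_ball_iff_exists_flower hx, ?_⟩
  ext Z
  constructor
  · rintro ⟨x, hx, rfl⟩
    obtain ⟨y, hy, hxy⟩ := exists_mem_flower hx.le
    exact ⟨⟨x, hx, fun _ _ => rfl⟩, y, _, hy, by omega,
      setOf_equidistant_on_ball_eq_flower hy (by omega) hxy⟩
  · rintro ⟨⟨x, hx⟩, y, r, hy, hr, rfl⟩
    exact ⟨x, hy ▸ wordDist_lt_of_mem_flower hr hx,
      (setOf_equidistant_on_ball_eq_flower hy hr hx).symm⟩
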